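/- arXiv:1804.06270 — 3 statements merged into one kernel-verified Lean document; each statement's English description precedes it below -/
import Mathlib

section
/- Let $I\subseteq\{0,\ldots,d\}$ with $0\notin I$. Then $\Diamond^d(\Gamma^d_I)=\{0\}*\pi(\Diamond^{d-1}(\Gamma^{d-1}_{I-1}))$, where $\pi$ is the vertex relabeling sending $i\mapsto i+1$ and $v_i\mapsto v_{i+1}$ for $0\le i\le d-1$, and $I-1=\{i-1: i\in I\}$. -/
namespace Paper

/-- Ambient vertex type in dimension `d`: original vertices `0,…,d+1` (left)
and new vertices `v_0,…,v_d` (right). -/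
abbrev V (d : ℕ) := Sum (Fin (d+2)) (Fin (d+1))

def origV (d m : ℕ) : V d := Sum.inl ⟨m % (d+2), Nat.mod_lt m (by omega)⟩
def newV (d m : ℕ) : V d := Sum.inr ⟨m % (d+1), Nat.mod_lt m (by omega)⟩

variable {W : Type*} [DecidableEq W] {W' : Type*} [DecidableEq W']

def IsComplex (Δ : Set (Finset W)) : Prop := ∀ F ∈ Δ, ∀ G, G ⊆ F → G ∈ Δ

def isFacet (Δ : Set (Finset W)) (F : Finset W) : Prop :=
  F ∈ Δ ∧ ∀ G ∈ Δ, F ⊆ G → G = F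

def simplexOn (A : Finset W) : Set (Finset W) := {F | F ⊆ A}

def bdrySimplex (A : Finset W) : Set (Finset W) := {F | F ⊂ A}

def joinC (Δ Γ : Set (Finset W)) : Set (Finset W) := {s | ∃ a ∈ Δ, ∃ b ∈ Γ, s = a ∪ b}

def lkC (Δ : Set (Finset W)) (F : Finset W) : Set (Finset W) :=
  {G | Disjoint F G ∧ F ∪ G ∈ Δ}

def delFace (Δ : Set (Finset W)) (F : Finset W) : Set (Finset W) := {G ∈ Δ | ¬ F ⊆ G}

/-- Stellar subdivision at `F` with new vertex `v`. -/
def sdC (v : W) (F : Finset W) (Δ : Set (Finset W)) : Set (Finset W) :=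
  delFace Δ F ∪ joinC (simplexOn {v}) (joinC (bdrySimplex F) (lkC Δ F))

/-- Deletion of a subcomplex: the complex generated by the facets of `Δ`
that are not facets of `Γ`. -/
def delSub (Δ Γ : Set (Finset W)) : Set (Finset W) :=
  {G | ∃ F, isFacet Δ F ∧ ¬ isFacet Γ F ∧ G ⊆ F}

def IsInduced (Γ Δ : Set (Finset W)) : Prop :=
  Γ ⊆ Δ ∧ ∀ F ∈ Δ, (∀ v ∈ F, ({v} : Finset W) ∈ Γ) → F ∈ Γ

/-- Simplicial isomorphism (via a permutation of the ambient vertex set). -/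
def IsoC (Δ Γ : Set (Finset W)) : Prop :=
  ∃ e : Equiv.Perm W, ∀ F : Finset W, F ∈ Δ ↔ F.image (⇑e) ∈ Γ

def mapC (f : W → W') (Δ : Set (Finset W)) : Set (Finset W') := {F | ∃ G ∈ Δ, F = G.image f}

/-- Number of faces of cardinality `i` (i.e. dimension `i-1`). -/
noncomputable def fnum (Δ : Set (Finset W)) (i : ℕ) : ℕ := {F | F ∈ Δ ∧ F.card = i}.ncard

/-- `h`-numbers of a `d`-dimensional complex. -/
noncomputable def hnum (d : ℕ) (Δ : Set (Finset W)) (j : ℕ) : ℤ :=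
  ∑ i ∈ Finset.range (j+1),
    (-1 : ℤ)^(j-i) * ((d+1-i).choose (d+1-j) : ℤ) * (fnum Δ i : ℤ)

/-- `R` is the restriction face of the `i`-th facet of the ordering `L`. -/
def IsRestriction (L : List (Finset W)) (i : ℕ) (R : Finset W) : Prop :=
  R ⊆ L.getD i ∅ ∧ (∀ j < i, ¬ R ⊆ L.getD j ∅) ∧
    ∀ G ⊆ L.getD i ∅, (∀ j < i, ¬ G ⊆ L.getD j ∅) → R ⊆ G

def IsShelling (Δ : Set (Finset W)) (L : List (Finset W)) : Prop :=
  L.Nodup ∧ (∀ F, F ∈ L ↔ isFacet Δ F) ∧ ∀ i < L.length, ∃ R, IsRestriction L i R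

def Shellable (Δ : Set (Finset W)) : Prop := ∃ L, IsShelling Δ L

def IsRelRestriction (Sg : Set (Finset W)) (L : List (Finset W)) (i : ℕ) (R : Finset W) : Prop :=
  R ⊆ L.getD i ∅ ∧ R ∉ Sg ∧ (∀ j < i, ¬ R ⊆ L.getD j ∅) ∧
    ∀ G ⊆ L.getD i ∅, G ∉ Sg → (∀ j < i, ¬ G ⊆ L.getD j ∅) → R ⊆ G

/-- Shelling of the relative complex `(Δ, Sg)`. -/
def IsRelShelling (Δ Sg : Set (Finset W)) (L : List (Finset W)) : Prop :=
  L.Nodup ∧ (∀ F, F ∈ L ↔ (isFacet Δ F ∧ F ∉ Sg)) ∧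
    ∀ i < L.length, ∃ R, IsRelRestriction Sg L i R

/-- The facet of the `(d+1)`-simplex on `{0,…,d+1}` omitting vertex `i`. -/
def Gface (d i : ℕ) : Finset (V d) :=
  ((Finset.range (d+2)).filter (fun j => j ≠ i)).image (origV d)

def GammaC (d i : ℕ) : Set (Finset (V d)) := simplexOn (Gface d i)

def GammaU (d : ℕ) (I : Finset ℕ) : Set (Finset (V d)) := {F | ∃ i ∈ I, F ⊆ Gface d i}

/-- The face `F_i = {i+1,…,d+1}` subdivided by the diamond operation. -/
def Fsub (d i : ℕ) : Finset (V d) := (Finset.Ioc i (d+1)).image (origV d)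

/-- The diamond operation: successive stellar subdivisions at `F_0, F_1, …, F_d`
with new vertices `v_0,…,v_d` (subdivision at a non-face has no effect). -/
def Diam (d : ℕ) (Δ : Set (Finset (V d))) : Set (Finset (V d)) :=
  (List.range (d+1)).foldl (fun Γ i => sdC (newV d i) (Fsub d i) Γ) Δ

def DiamU (d : ℕ) (I : Finset ℕ) : Set (Finset (V d)) := Diam d (GammaU d I)

/-- Boundary complex of the cross-polytope on the vertex pairs `{j, v_j}`, `j ∈ S`. -/
def crossN (d : ℕ) (S : Finset ℕ) : Set (Finset (V d)) :=
  {F | (∀ x ∈ F, ∃ j ∈ S, x = origV d j ∨ x = newV d j) ∧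
       ∀ j ∈ S, ¬ (origV d j ∈ F ∧ newV d j ∈ F)}

/-- Boundary complex: generated by the faces of cardinality `n` contained in
exactly one facet. -/
def bdryC (n : ℕ) (Δ : Set (Finset W)) : Set (Finset W) :=
  {G | ∃ F, G ⊆ F ∧ F ∈ Δ ∧ F.card = n ∧ ∃! H, isFacet Δ H ∧ F ⊆ H}

/-- Positions in `P` at which `G` differs from the reference facet `F0`. -/
def diffSet (d : ℕ) (P : Finset ℕ) (F0 G : Finset (V d)) : Finset ℕ :=
  P.filter (fun j => decide (origV d j ∈ G) ≠ decide (origV d j ∈ F0))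

/-- Degree lexicographic comparison of characteristic (difference) sets. -/
def dlexLT (D D' : Finset ℕ) : Prop :=
  D.card < D'.card ∨
    (D.card = D'.card ∧ ∃ m, m ∉ D ∧ m ∈ D' ∧ ∀ j < m, (j ∈ D ↔ j ∈ D'))

/-- `L` lists the facets of `Δ` in degree lexicographic order w.r.t. `F0`. -/
def IsDegLexOrder (d : ℕ) (P : Finset ℕ) (Δ : Set (Finset (V d)))
    (F0 : Finset (V d)) (L : List (Finset (V d))) : Prop :=
  L.Nodup ∧ (∀ F, F ∈ L ↔ isFacet Δ F) ∧
    L.Pairwise (fun G G' => dlexLT (diffSet d P F0 G) (diffSet d P F0 G'))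

/-- Vertices of `F` sitting at the positions in `D`. -/
def posVerts (d : ℕ) (F : Finset (V d)) (D : Finset ℕ) : Finset (V d) :=
  F.filter (fun x => ∃ j ∈ D, x = origV d j ∨ x = newV d j)

def IsoN (Δ Γ : Set (Finset ℕ)) : Prop :=
  ∃ e : Equiv.Perm ℕ, ∀ F : Finset ℕ, F ∈ Δ ↔ F.image (⇑e) ∈ Γ

def StellarMove (Δ Γ : Set (Finset ℕ)) : Prop :=
  ∃ (F : Finset ℕ) (v : ℕ), F ∈ Δ ∧ F ≠ ∅ ∧ (∀ G ∈ Δ, v ∉ G) ∧ Γ = sdC v F Δ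

/-- PL homeomorphism of simplicial complexes, encoded via Alexander's theorem as
stellar equivalence: the equivalence relation generated by stellar subdivisions
(and their inverses, the welds) together with simplicial isomorphisms. -/
def PLHomeo (Δ Γ : Set (Finset ℕ)) : Prop :=
  Relation.EqvGen (fun A B => StellarMove A B ∨ IsoN A B) Δ Γ

def encV (d : ℕ) : V d → ℕ := Sum.elim (fun j => 2 * j.val) (fun j => 2 * j.val + 1)

def toN (d : ℕ) (Δ : Set (Finset (V d))) : Set (Finset ℕ) := mapC (encV d) Δ

def ballN (c : ℕ) : Set (Finset ℕ) := {F | F ⊆ Finset.range c}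

def sphereN (c : ℕ) : Set (Finset ℕ) := {F | F ⊂ Finset.range (c+1)}

/-- `Δ` is a combinatorial ball of dimension `c-1` (a `(c-1)`-simplex has `c` vertices). -/
def IsCombBall (d c : ℕ) (Δ : Set (Finset (V d))) : Prop := PLHomeo (toN d Δ) (ballN c)

/-- `Δ` is a combinatorial sphere of dimension `c-1`. -/
def IsCombSphere (d c : ℕ) (Δ : Set (Finset (V d))) : Prop := PLHomeo (toN d Δ) (sphereN c)

def ConnC (Δ : Set (Finset W)) : Prop :=
  ∀ u v : W, ({u} : Finset W) ∈ Δ → ({v} : Finset W) ∈ Δ →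
    Relation.ReflTransGen (fun a b => ({a, b} : Finset W) ∈ Δ) u v

/-- Combinatorial `d`-manifold (possibly with boundary): connected, pure, and all
links of nonempty faces are combinatorial balls or spheres of dimension `d - |F|`. -/
def IsCombManifold (d : ℕ) (Δ : Set (Finset (V d))) : Prop :=
  IsComplex Δ ∧ (∅ : Finset (V d)) ∈ Δ ∧ ConnC Δ ∧
  (∀ F ∈ Δ, ∃ G, isFacet Δ G ∧ F ⊆ G ∧ G.card = d+1) ∧
  ∀ F ∈ Δ, F ≠ (∅ : Finset (V d)) →
    (IsCombBall d (d+1-F.card) (lkC Δ F) ∨ IsCombSphere d (d+1-F.card) (lkC Δ F))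

def liftV (d : ℕ) : V d → V (d+1) := Sum.map Fin.castSucc Fin.castSucc

/-- The relabeling `π : i ↦ i+1`, `v_i ↦ v_{i+1}`. -/
def piV (d : ℕ) : V d → V (d+1) := Sum.map Fin.succ Fin.succ

/-- The relabeling `ρ : i ↦ i-1`, `v_i ↦ v_{i-1}` (indices mod `d+1`). -/
def rhoV (d : ℕ) : V d → V d := fun x =>
  match x with
  | Sum.inl j => origV d ((j.val + d) % (d+1))
  | Sum.inr j => newV d ((j.val + d) % (d+1))

/-- `ψ` swaps the vertices `d` and `v_d`. -/
def psiV (d : ℕ) : V d → V d := fun x => Equiv.swap (origV d d) (newV d d) x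

def sigmaV (d : ℕ) : V d → V d := psiV d ∘ rhoV d

/-- `Δ` is (isomorphic to) the boundary complex of the `(d+1)`-dimensional
cross-polytope. -/
def IsCrossBdry (d : ℕ) (Δ : Set (Finset W)) : Prop :=
  ∃ f : Fin (d+1) × Bool → W, Function.Injective f ∧
    Δ = {F | (∀ v ∈ F, ∃ p, v = f p) ∧
             ∀ j : Fin (d+1), ¬ (f (j, true) ∈ F ∧ f (j, false) ∈ F)}

/-- `Sg` is a connected sum of `Δ` and `Γ`: they meet exactly in the full simplex
on a common facet `F`, which is removed. -/
def IsConnSum (Δ Γ Sg : Set (Finset W)) : Prop :=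
  ∃ F : Finset W, isFacet Δ F ∧ isFacet Γ F ∧ Δ ∩ Γ = simplexOn F ∧ Sg = (Δ ∪ Γ) \ {F}

/-- Connected sum of `m+1` copies of the boundary of the `(d+1)`-cross-polytope. -/
def IsCrossStacked (d : ℕ) : ℕ → Set (Finset W) → Prop
  | 0, Δ => IsCrossBdry d Δ
  | (m+1), Δ => ∃ A B : Set (Finset W), IsCrossStacked d m A ∧ IsCrossBdry d B ∧ IsConnSum A B Δ

/-- The initial facet of the block `Diam(Γ_{iℓ})` (for block index `ℓ ≥ 1`;
block `0` uses the facet `G0` meeting the boundary). -/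
def initFacet (d i1 iℓ : ℕ) (G0 : Finset (V d)) (ℓ : ℕ) : Finset (V d) :=
  if ℓ = 0 then G0
  else ((Finset.range iℓ).image (origV d)) ∪ {newV d iℓ} ∪
       ((Finset.Ioo iℓ (max i1 iℓ)).image (origV d)) ∪
       ((Finset.Icc (max i1 iℓ) d).image (newV d))

/-! The diamond operation only subdivides faces `F_i = {i+1,…,d+1}`. If `0 ∉ I`, then `F_0`
is not a face of `Γ_I`, so the first subdivision does nothing, and `Γ_I` is the cone with
apex `0` over the `π`-image of `Γ_{I-1}`. Stellar subdivision at a face avoiding the apex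
commutes with taking cones, and it commutes with injective relabelings, while `π` carries
`F_i`, `v_i` in dimension `d` to `F_{i+1}`, `v_{i+1}` in dimension `d+1`. -/

section Complexes

variable {W W' : Type*} [DecidableEq W']

lemma mapC_union (f : W → W') (A B : Set (Finset W)) :
    mapC f (A ∪ B) = mapC f A ∪ mapC f B := by
  ext F
  simp only [mapC, Set.mem_union, Set.mem_ofPred_eq, or_and_right, exists_or]

lemma mapC_delFace {f : W → W'} (hf : Function.Injective f) (F : Finset W)
    (Δ : Set (Finset W)) : mapC f (delFace Δ F) = delFace (mapC f Δ) (F.image f) := by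
  ext G
  constructor
  · rintro ⟨H, ⟨hH, hFH⟩, rfl⟩
    exact ⟨⟨H, hH, rfl⟩, by rwa [Finset.image_subset_image_iff hf]⟩
  · rintro ⟨⟨H, hH, rfl⟩, hFH⟩
    exact ⟨H, ⟨hH, fun h => hFH (Finset.image_subset_image h)⟩, rfl⟩

lemma mapC_simplexOn_singleton (f : W → W') (v : W) :
    mapC f (simplexOn {v}) = simplexOn {f v} := by
  ext G
  show (∃ H : Finset W, H ⊆ {v} ∧ G = H.image f) ↔ G ⊆ {f v}
  rw [← Finset.image_singleton, Finset.subset_image_iff]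
  exact exists_congr fun H => and_congr_right fun _ => eq_comm

lemma mapC_bdrySimplex {f : W → W'} (hf : Function.Injective f) (F : Finset W) :
    mapC f (bdrySimplex F) = bdrySimplex (F.image f) := by
  ext G
  constructor
  · rintro ⟨H, hH, rfl⟩
    exact (Finset.image_ssubset_image hf).mpr hH
  · intro hG
    obtain ⟨H, -, rfl⟩ := Finset.subset_image_iff.mp hG.subset
    exact ⟨H, (Finset.image_ssubset_image hf).mp hG, rfl⟩

variable [DecidableEq W]

/-- The cone with apex `v` over `Δ`, provided `v` is not a vertex of `Δ`. -/
def coneC (v : W) (Δ : Set (Finset W)) : Set (Finset W) := {F | F.erase v ∈ Δ}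

lemma joinC_simplexOn_singleton {v : W} {Δ : Set (Finset W)} (hΔ : ∀ G ∈ Δ, v ∉ G) :
    joinC (simplexOn {v}) Δ = coneC v Δ := by
  ext F
  constructor
  · rintro ⟨a, ha, b, hb, rfl⟩
    show (a ∪ b).erase v ∈ Δ
    rwa [Finset.erase_union_distrib,
      (Finset.erase_eq_empty_iff _ _).mpr (Finset.subset_singleton_iff.mp ha), Finset.empty_union,
      Finset.erase_eq_of_notMem (hΔ b hb)]
  · intro hF
    refine ⟨F ∩ {v}, Finset.inter_subset_right, F.erase v, hF, ?_⟩
    ext x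
    by_cases hx : x = v <;> simp [hx]

lemma coneC_union (v : W) (A B : Set (Finset W)) :
    coneC v (A ∪ B) = coneC v A ∪ coneC v B := rfl

lemma delFace_coneC {v : W} {F : Finset W} (hvF : v ∉ F) (Δ : Set (Finset W)) :
    delFace (coneC v Δ) F = coneC v (delFace Δ F) := by
  ext H
  show (H.erase v ∈ Δ ∧ ¬ F ⊆ H) ↔ (H.erase v ∈ Δ ∧ ¬ F ⊆ H.erase v)
  rw [Finset.subset_erase, and_iff_left hvF]

lemma lkC_coneC {v : W} {F : Finset W} (hvF : v ∉ F) (Δ : Set (Finset W)) :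
    lkC (coneC v Δ) F = coneC v (lkC Δ F) := by
  ext H
  show (Disjoint F H ∧ (F ∪ H).erase v ∈ Δ) ↔ (Disjoint F (H.erase v) ∧ F ∪ H.erase v ∈ Δ)
  rw [Finset.erase_union_distrib, ← Finset.disjoint_erase_comm, Finset.erase_eq_of_notMem hvF]

lemma joinC_coneC {v : W} {A B : Set (Finset W)} (hA : ∀ a ∈ A, v ∉ a)
    (hB : ∀ b ∈ B, v ∉ b) : joinC A (coneC v B) = coneC v (joinC A B) := by
  ext s
  constructor
  · rintro ⟨a, ha, h, hh, rfl⟩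
    refine ⟨a, ha, h.erase v, hh, ?_⟩
    rw [Finset.erase_union_distrib, Finset.erase_eq_of_notMem (hA a ha)]
  · rintro ⟨a, ha, b, hb, hs⟩
    refine ⟨a, ha, b ∪ s ∩ {v}, ?_, ?_⟩
    · show (b ∪ s ∩ {v}).erase v ∈ B
      rwa [Finset.erase_union_distrib, Finset.erase_eq_of_notMem (hB b hb),
        (Finset.erase_eq_empty_iff _ _).mpr
          (Finset.subset_singleton_iff.mp Finset.inter_subset_right),
        Finset.union_empty]
    · rw [← Finset.union_assoc, ← hs]
      ext x
      by_cases hx : x = v <;> simp [hx]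

lemma sdC_coneC {v₀ v : W} {F : Finset W} {Δ : Set (Finset W)} (hv : v₀ ≠ v) (hvF : v₀ ∉ F)
    (hΔ : ∀ G ∈ Δ, v₀ ∉ G) : sdC v F (coneC v₀ Δ) = coneC v₀ (sdC v F Δ) := by
  have hbdry : ∀ a ∈ bdrySimplex F, v₀ ∉ a := fun a ha h => hvF ((show a ⊂ F from ha).subset h)
  have hlk : ∀ b ∈ lkC Δ F, v₀ ∉ b := fun b ⟨_, hu⟩ h => hΔ _ hu (Finset.mem_union_right _ h)
  have hjoin : ∀ s ∈ joinC (bdrySimplex F) (lkC Δ F), v₀ ∉ s := by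
    rintro s ⟨a, ha, b, hb, rfl⟩ h
    exact (Finset.mem_union.mp h).elim (hbdry a ha) (hlk b hb)
  have hapex : ∀ a ∈ simplexOn ({v} : Finset W), v₀ ∉ a :=
    fun a ha h => hv (Finset.mem_singleton.mp (ha h))
  unfold sdC
  rw [delFace_coneC hvF, lkC_coneC hvF, joinC_coneC hbdry hlk, joinC_coneC hapex hjoin,
    coneC_union]

lemma sdC_of_forall_not_subset {v : W} {F : Finset W} {Δ : Set (Finset W)}
    (hF : ∀ G ∈ Δ, ¬ F ⊆ G) : sdC v F Δ = Δ := by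
  have hdel : delFace Δ F = Δ := Set.sep_eq_self_iff_mem_true.mpr hF
  have hlk : lkC Δ F = ∅ :=
    Set.eq_empty_iff_forall_notMem.mpr fun G hG => hF _ hG.2 Finset.subset_union_left
  have hjoin : ∀ A : Set (Finset W), joinC A ∅ = ∅ := fun A =>
    Set.eq_empty_iff_forall_notMem.mpr fun s ⟨_, _, _, hb, _⟩ => hb
  unfold sdC
  rw [hdel, hlk, hjoin, hjoin, Set.union_empty]

lemma mapC_joinC (f : W → W') (A B : Set (Finset W)) :
    mapC f (joinC A B) = joinC (mapC f A) (mapC f B) := by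
  ext F
  constructor
  · rintro ⟨G, ⟨a, ha, b, hb, rfl⟩, rfl⟩
    exact ⟨a.image f, ⟨a, ha, rfl⟩, b.image f, ⟨b, hb, rfl⟩, Finset.image_union a b⟩
  · rintro ⟨x, ⟨a, ha, rfl⟩, y, ⟨b, hb, rfl⟩, rfl⟩
    exact ⟨a ∪ b, ⟨a, ha, b, hb, rfl⟩, (Finset.image_union a b).symm⟩

lemma mapC_lkC {f : W → W'} (hf : Function.Injective f) (F : Finset W)
    (Δ : Set (Finset W)) : mapC f (lkC Δ F) = lkC (mapC f Δ) (F.image f) := by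
  ext G
  constructor
  · rintro ⟨H, ⟨hd, hu⟩, rfl⟩
    exact ⟨(Finset.disjoint_image hf).mpr hd, F ∪ H, hu, (Finset.image_union F H).symm⟩
  · rintro ⟨hd, K, hK, hu⟩
    have hG : G ⊆ K.image f := hu ▸ Finset.subset_union_right
    obtain ⟨G₀, -, rfl⟩ := Finset.subset_image_iff.mp hG
    have hFG : F ∪ G₀ = K := Finset.image_injective hf (by rw [Finset.image_union, hu])
    exact ⟨G₀, ⟨(Finset.disjoint_image hf).mp hd, hFG ▸ hK⟩, rfl⟩

lemma mapC_sdC {f : W → W'} (hf : Function.Injective f) (v : W) (F : Finset W)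
    (Δ : Set (Finset W)) : mapC f (sdC v F Δ) = sdC (f v) (F.image f) (mapC f Δ) := by
  unfold sdC
  rw [mapC_union, mapC_joinC, mapC_joinC, mapC_delFace hf, mapC_lkC hf,
    mapC_bdrySimplex hf, mapC_simplexOn_singleton]

end Complexes

lemma origV_of_lt {d m : ℕ} (h : m < d+2) : origV d m = Sum.inl ⟨m, h⟩ := by
  simp [origV, Nat.mod_eq_of_lt h]

lemma newV_of_lt {d m : ℕ} (h : m < d+1) : newV d m = Sum.inr ⟨m, h⟩ := by
  simp [newV, Nat.mod_eq_of_lt h]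

lemma piV_injective (d : ℕ) : Function.Injective (piV d) :=
  (Fin.succ_injective _).sumMap (Fin.succ_injective _)

lemma piV_origV {d m : ℕ} (h : m < d+2) : piV d (origV d m) = origV (d+1) (m+1) := by
  rw [origV_of_lt h, origV_of_lt (by omega : m+1 < d+3)]
  rfl

lemma piV_newV {d m : ℕ} (h : m < d+1) : piV d (newV d m) = newV (d+1) (m+1) := by
  rw [newV_of_lt h, newV_of_lt (by omega : m+1 < d+2)]
  rfl

lemma origV_zero_notMem_image_piV (d : ℕ) (G : Finset (V d)) :
    origV (d+1) 0 ∉ G.image (piV d) := by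
  rw [origV_of_lt (by omega), Finset.mem_image]
  rintro ⟨x | x, -, h⟩
  · exact Fin.succ_ne_zero x (Sum.inl_injective h)
  · exact Sum.inr_ne_inl h

lemma origV_zero_notMem_of_mem_mapC_piV {d : ℕ} {Δ : Set (Finset (V d))} :
    ∀ G ∈ mapC (piV d) Δ, origV (d+1) 0 ∉ G := by
  rintro G ⟨H, -, rfl⟩
  exact origV_zero_notMem_image_piV d H

lemma Fsub_succ (d i : ℕ) : Fsub (d+1) (i+1) = (Fsub d i).image (piV d) := by
  rw [Fsub, Fsub, Finset.image_image, ← Finset.image_add_right_Ioc, Finset.image_image]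
  refine Finset.image_congr fun m hm => (piV_origV ?_).symm
  have := (Finset.mem_Ioc.mp hm).2
  omega

lemma Gface_succ (d : ℕ) {i : ℕ} (hi : i ≠ 0) :
    Gface (d+1) i = insert (origV (d+1) 0) ((Gface d (i-1)).image (piV d)) := by
  ext x
  simp only [Gface, Finset.mem_insert, Finset.mem_image, Finset.mem_filter, Finset.mem_range]
  constructor
  · rintro ⟨m, ⟨hm, hmi⟩, rfl⟩
    rcases m with _ | m
    · exact Or.inl rfl
    · exact Or.inr ⟨origV d m, ⟨m, ⟨by omega, by omega⟩, rfl⟩, piV_origV (by omega)⟩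
  · rintro (rfl | ⟨y, ⟨m, ⟨hm, hmi⟩, rfl⟩, rfl⟩)
    · exact ⟨0, ⟨by omega, by omega⟩, rfl⟩
    · exact ⟨m+1, ⟨by omega, by omega⟩, (piV_origV (by omega)).symm⟩

lemma GammaU_succ (d : ℕ) {I : Finset ℕ} (h0 : 0 ∉ I) :
    GammaU (d+1) I = coneC (origV (d+1) 0) (mapC (piV d) (GammaU d (I.image (· - 1)))) := by
  ext F
  have hi0 : ∀ i ∈ I, i ≠ 0 := fun i hi h => h0 (h ▸ hi)
  constructor
  · rintro ⟨i, hi, hF⟩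
    rw [Gface_succ d (hi0 i hi), Finset.subset_insert_iff, Finset.subset_image_iff] at hF
    obtain ⟨G, hG, hGF⟩ := hF
    exact ⟨G, ⟨i-1, Finset.mem_image_of_mem _ hi, hG⟩, hGF.symm⟩
  · rintro ⟨G, ⟨_, hi', hG⟩, hGF⟩
    obtain ⟨i, hi, rfl⟩ := Finset.mem_image.mp hi'
    refine ⟨i, hi, ?_⟩
    rw [Gface_succ d (hi0 i hi), Finset.subset_insert_iff, hGF]
    exact Finset.image_subset_image hG

lemma Fsub_zero_not_subset_of_mem_GammaU (d : ℕ) {I : Finset ℕ} (hI : ∀ i ∈ I, i ≤ d+2)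
    (h0 : 0 ∉ I) : ∀ G ∈ GammaU (d+1) I, ¬ Fsub (d+1) 0 ⊆ G := by
  rintro G ⟨i, hi, hG⟩ hsub
  have hi0 : i ≠ 0 := fun h => h0 (h ▸ hi)
  have hmem := hG (hsub (Finset.mem_image_of_mem _ (Finset.mem_Ioc.mpr ⟨by omega, hI i hi⟩)))
  obtain ⟨m, hm, heq⟩ := Finset.mem_image.mp hmem
  rw [Finset.mem_filter, Finset.mem_range] at hm
  rw [origV_of_lt hm.1, origV_of_lt (by have := hI i hi; omega)] at heq
  exact hm.2 (Fin.mk.inj_iff.mp (Sum.inl_injective heq))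

lemma sdC_coneC_mapC_piV {d i : ℕ} (hi : i ≤ d) (Δ : Set (Finset (V d))) :
    sdC (newV (d+1) (i+1)) (Fsub (d+1) (i+1)) (coneC (origV (d+1) 0) (mapC (piV d) Δ)) =
      coneC (origV (d+1) 0) (mapC (piV d) (sdC (newV d i) (Fsub d i) Δ)) := by
  have hv : origV (d+1) 0 ≠ newV (d+1) (i+1) := Sum.inl_ne_inr
  rw [sdC_coneC hv (by rw [Fsub_succ]; exact origV_zero_notMem_image_piV d _)
      origV_zero_notMem_of_mem_mapC_piV, mapC_sdC (piV_injective d), piV_newV (by omega),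
    Fsub_succ]

lemma foldl_sdC_coneC_mapC_piV {d : ℕ} (l : List ℕ) (hl : ∀ i ∈ l, i ≤ d)
    (Δ : Set (Finset (V d))) :
    (l.map (· + 1)).foldl (fun Γ i => sdC (newV (d+1) i) (Fsub (d+1) i) Γ)
        (coneC (origV (d+1) 0) (mapC (piV d) Δ)) =
      coneC (origV (d+1) 0)
        (mapC (piV d) (l.foldl (fun Γ i => sdC (newV d i) (Fsub d i) Γ) Δ)) := by
  induction l generalizing Δ with
  | nil => rfl
  | cons i l ih =>
    rw [List.map_cons, List.foldl_cons, List.foldl_cons,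
      sdC_coneC_mapC_piV (hl i List.mem_cons_self),
      ih (fun j hj => hl j (List.mem_cons_of_mem _ hj))]

lemma Diam_succ_coneC_mapC_piV {d : ℕ} (Δ : Set (Finset (V d)))
    (hF0 : ∀ G ∈ coneC (origV (d+1) 0) (mapC (piV d) Δ), ¬ Fsub (d+1) 0 ⊆ G) :
    Diam (d+1) (coneC (origV (d+1) 0) (mapC (piV d) Δ)) =
      coneC (origV (d+1) 0) (mapC (piV d) (Diam d Δ)) := by
  rw [Diam, List.range_succ_eq_map, List.foldl_cons, sdC_of_forall_not_subset hF0]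
  exact foldl_sdC_coneC_mapC_piV _ (fun i hi => Nat.lt_succ_iff.mp (List.mem_range.mp hi)) Δ

-- The paper's dimension `d` is `d+1` here.
/-- (paper's dimension `d` rendered as `d+1`) if `0 ∉ I`, the
diamond complex is a cone over the relabeled lower-dimensional one. -/
theorem stmt11 (d : ℕ) (I : Finset ℕ) (hI : ∀ i ∈ I, i ≤ d+1) (h0 : 0 ∉ I) :
    DiamU (d+1) I =
      joinC (simplexOn {origV (d+1) 0})
        (mapC (piV d) (DiamU d (I.image (· - 1)))) := by
  have hF0 := Fsub_zero_not_subset_of_mem_GammaU d (fun i hi => (hI i hi).trans d.succ.le_succ) h0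
  rw [GammaU_succ d h0] at hF0
  rw [DiamU, DiamU, GammaU_succ d h0, Diam_succ_coneC_mapC_piV _ hF0,
    joinC_simplexOn_singleton origV_zero_notMem_of_mem_mapC_piV]

end Paper
end

section
/- Let $\Delta$ be a pure $d$-dimensional simplicial complex with shelling order $F_1,\ldots,F_m$ and restriction faces $R(F_j)$. Then for every $0\le i\le d+1$, $h_i(\Delta)=|\{1\le j\le m: |R(F_j)|=i\}|$. -/
namespace Paper

variable {W : Type*} [DecidableEq W] {W' : Type*} [DecidableEq W']

/-! A shelling partitions the faces of `Δ` into the disjoint Boolean intervals `[R(F_j), F_j]`: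
a face lies in the interval of the first facet containing it. An interval `[R, F]` with
`|F| = d + 1` has `C(d + 1 - |R|, k - |R|)` faces of size `k`, and the `h`-transform of this
`f`-vector is an alternating binomial sum equal to the indicator of `|R|`; summing over the
intervals gives `h_i = #{j | |R(F_j)| = i}`. -/

open Finset

theorem _root_.Nat.choose_mul_choose_sub_eq {n t s : ℕ} (hst : s ≤ t) (htn : t ≤ n) :
    n.choose s * (n - s).choose (n - t) = n.choose t * t.choose s := by
  rw [Nat.choose_symm_of_eq_add (show n - s = (n - t) + (t - s) by omega), Nat.choose_mul hst]

theorem _root_.Int.alternating_sum_range_choose_mul_choose {n t : ℕ} (htn : t ≤ n) :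
    ∑ s ∈ range (t + 1),
        (-1 : ℤ) ^ (t - s) * ((n - s).choose (n - t) * n.choose s : ℕ) =
      if t = 0 then 1 else 0 := by
  have hterm : ∀ s ∈ range (t + 1),
      (-1 : ℤ) ^ (t - s) * ((n - s).choose (n - t) * n.choose s : ℕ)
        = (-1) ^ t * n.choose t * ((-1) ^ s * t.choose s) := by
    intro s hs
    have hst : s ≤ t := Nat.lt_succ_iff.mp (mem_range.mp hs)
    have hsign : (-1 : ℤ) ^ (t - s) = (-1) ^ t * (-1) ^ s := by
      rw [← pow_add]
      simp [show t + s = t - s + 2 * s by omega, pow_add, pow_mul]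
    rw [mul_comm ((n - s).choose _), Nat.choose_mul_choose_sub_eq hst htn, hsign]
    push_cast
    ring
  rw [sum_congr rfl hterm, ← mul_sum, Int.alternating_sum_range_choose]
  split_ifs with ht <;> simp [ht]

theorem _root_.Int.sum_range_neg_one_pow_mul_choose_mul_ite {n i r : ℕ} (hi : i ≤ n)
    (hr : r ≤ n) :
    ∑ k ∈ range (i + 1), (-1 : ℤ) ^ (i - k) * ((n - k).choose (n - i) : ℤ) *
        (if r ≤ k then ((n - r).choose (k - r) : ℤ) else 0)
      = if r = i then 1 else 0 := by
  by_cases hri : r ≤ i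
  · rw [← sum_range_add_sum_Ico _ (show r ≤ i + 1 by omega),
      sum_eq_zero fun k hk => by rw [if_neg (by simpa using hk), mul_zero],
      zero_add, sum_Ico_eq_sum_range, show i + 1 - r = i - r + 1 by omega]
    convert Int.alternating_sum_range_choose_mul_choose (n := n - r) (t := i - r) (by omega)
      using 1
    · refine sum_congr rfl fun s hs => ?_
      rw [if_pos (by omega), show i - (r + s) = i - r - s by omega,
        show n - (r + s) = n - r - s by omega, show n - i = n - r - (i - r) by omega,
        Nat.add_sub_cancel_left]
      push_cast
      ring
    · simp only [show i - r = 0 ↔ r = i by omega]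
  · rw [if_neg (by omega)]
    exact sum_eq_zero fun k hk => by
      rw [if_neg (by simp at hk; omega), mul_zero]

theorem _root_.Finset.card_filter_card_Icc {α : Type*} [DecidableEq α] {R F : Finset α}
    (h : R ⊆ F) (k : ℕ) :
    #{G ∈ Icc R F | #G = k} = if #R ≤ k then (#F - #R).choose (k - #R) else 0 := by
  have hinj : Set.InjOn (R ∪ ·) ↑(F \ R).powerset := fun S hS T hT hST => by
    simp only [coe_powerset, Set.mem_preimage, Set.mem_powerset_iff, coe_subset] at hS hT
    rw [← union_sdiff_cancel_left (disjoint_of_subset_right hS disjoint_sdiff),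
      ← union_sdiff_cancel_left (disjoint_of_subset_right hT disjoint_sdiff)]
    exact congrArg (· \ R) hST
  have hcard : ∀ S ∈ (F \ R).powerset, #(R ∪ S) = #R + #S := fun S hS =>
    card_union_of_disjoint (disjoint_of_subset_right (mem_powerset.mp hS) disjoint_sdiff)
  rw [Icc_eq_image_powerset h, filter_image, card_image_of_injOn (hinj.mono (filter_subset _ _)),
    filter_congr fun S hS => by rw [hcard S hS], ← card_sdiff_of_subset h]
  split_ifs with hk
  · rw [← card_powersetCard, powersetCard_eq_filter]
    congr 1
    exact filter_congr fun S _ => by omega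
  · exact card_eq_zero.mpr (filter_eq_empty_iff.mpr fun S _ => by omega)

theorem exists_isFacet_superset {α : Type*} [Finite α] {Δ : Set (Finset α)} {G : Finset α}
    (hG : G ∈ Δ) : ∃ H, isFacet Δ H ∧ G ⊆ H := by
  obtain ⟨H, hGH, hH⟩ := Finite.exists_le_maximal (p := (· ∈ Δ)) hG
  exact ⟨H, ⟨hH.1, fun K hK hHK => hH.eq_of_ge hK hHK⟩, hGH⟩

theorem fnum_eq_sum_card_filter_Icc {ι : Type*} {Δ : Set (Finset W)} {s : Finset ι}
    {R F : ι → Finset W} (hdisj : (s : Set ι).PairwiseDisjoint fun j => Icc (R j) (F j))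
    (hΔ : Δ = ↑(s.biUnion fun j => Icc (R j) (F j))) (k : ℕ) :
    fnum Δ k = ∑ j ∈ s, #{G ∈ Icc (R j) (F j) | #G = k} := by
  rw [← card_biUnion (hdisj.mono fun j => filter_subset _ _), ← filter_biUnion,
    ← Set.ncard_coe_finset, coe_filter, fnum, hΔ]
  rfl

theorem hnum_eq_card_filter_of_pairwiseDisjoint_Icc {ι : Type*} {d : ℕ} {Δ : Set (Finset W)}
    {s : Finset ι} {R F : ι → Finset W} (hRF : ∀ j ∈ s, R j ⊆ F j)
    (hF : ∀ j ∈ s, #(F j) = d + 1)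
    (hdisj : (s : Set ι).PairwiseDisjoint fun j => Icc (R j) (F j))
    (hΔ : Δ = ↑(s.biUnion fun j => Icc (R j) (F j))) {i : ℕ} (hi : i ≤ d + 1) :
    hnum d Δ i = #{j ∈ s | #(R j) = i} := by
  have hfnum : ∀ k, (fnum Δ k : ℤ) =
      ∑ j ∈ s, if #(R j) ≤ k then ((d + 1 - #(R j)).choose (k - #(R j)) : ℤ) else 0 := by
    intro k
    rw [fnum_eq_sum_card_filter_Icc hdisj hΔ, Nat.cast_sum]
    refine sum_congr rfl fun j hj => ?_
    rw [card_filter_card_Icc (hRF j hj), hF j hj]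
    split_ifs <;> simp
  calc hnum d Δ i
      = ∑ j ∈ s, ∑ k ∈ range (i + 1),
          (-1 : ℤ) ^ (i - k) * ((d + 1 - k).choose (d + 1 - i) : ℤ) *
            (if #(R j) ≤ k then ((d + 1 - #(R j)).choose (k - #(R j)) : ℤ) else 0) := by
        simp only [hnum, hfnum, mul_sum]
        exact sum_comm
    _ = ∑ j ∈ s, if #(R j) = i then 1 else 0 := sum_congr rfl fun j hj =>
        Int.sum_range_neg_one_pow_mul_choose_mul_ite hi (hF j hj ▸ card_le_card (hRF j hj))
    _ = #{j ∈ s | #(R j) = i} := by rw [sum_boole]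

section

variable {L : List (Finset W)} {R : ℕ → Finset W}

theorem pairwiseDisjoint_Icc_of_isRestriction (hR : ∀ j < L.length, IsRestriction L j (R j)) :
    (range L.length : Set ℕ).PairwiseDisjoint fun j => Icc (R j) (L.getD j ∅) := by
  intro a ha b hb hab
  rw [Function.onFun, disjoint_left]
  intro G hGa hGb
  rw [mem_Icc] at hGa hGb
  rcases hab.lt_or_gt with h | h
  · exact (hR b (by simpa using hb)).2.1 a h (hGb.1.trans hGa.2)
  · exact (hR a (by simpa using ha)).2.1 b h (hGa.1.trans hGb.2)

theorem exists_mem_Icc_of_isRestriction (hR : ∀ j < L.length, IsRestriction L j (R j))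
    {G : Finset W} (hG : ∃ j < L.length, G ⊆ L.getD j ∅) :
    ∃ j < L.length, R j ⊆ G ∧ G ⊆ L.getD j ∅ := by
  classical
  obtain ⟨hj, hGj⟩ := Nat.find_spec hG
  exact ⟨Nat.find hG, hj,
    (hR _ hj).2.2 G hGj fun k hk hGk => Nat.find_min hG hk ⟨by omega, hGk⟩, hGj⟩

theorem IsShelling.eq_biUnion_Icc [Finite W] {Δ : Set (Finset W)} (hcx : IsComplex Δ)
    (hL : IsShelling Δ L) (hR : ∀ j < L.length, IsRestriction L j (R j)) :
    Δ = ↑((range L.length).biUnion fun j => Icc (R j) (L.getD j ∅)) := by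
  ext G
  simp only [coe_biUnion, mem_coe, mem_range, mem_Icc, Set.mem_iUnion, exists_prop]
  constructor
  · intro hG
    obtain ⟨H, hH, hGH⟩ := exists_isFacet_superset hG
    obtain ⟨j, hj, rfl⟩ := List.getElem_of_mem ((hL.2.1 H).2 hH)
    exact exists_mem_Icc_of_isRestriction hR ⟨j, hj, by rwa [List.getD_eq_getElem]⟩
  · rintro ⟨j, hj, -, hGF⟩
    rw [List.getD_eq_getElem _ _ hj] at hGF
    exact hcx _ ((hL.2.1 _).1 (List.getElem_mem hj)).1 G hGF

end

/-- the `h`-numbers of a shellable pure complex count restriction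
faces of each cardinality. -/
theorem stmt14 {W : Type*} [DecidableEq W] [Fintype W] (d : ℕ) (Δ : Set (Finset W))
    (hcx : IsComplex Δ) (hpure : ∀ F, isFacet Δ F → F.card = d+1)
    (L : List (Finset W)) (hL : IsShelling Δ L)
    (R : ℕ → Finset W) (hR : ∀ j < L.length, IsRestriction L j (R j)) :
    ∀ i ≤ d+1,
      hnum d Δ i =
        (((Finset.range L.length).filter (fun j => (R j).card = i)).card : ℤ) := by
  intro i hi
  refine hnum_eq_card_filter_of_pairwiseDisjoint_Icc (fun j hj => (hR j (mem_range.mp hj)).1)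
    (fun j hj => ?_) (pairwiseDisjoint_Icc_of_isRestriction hR) (hL.eq_biUnion_Icc hcx hR) hi
  have hj : j < L.length := mem_range.mp hj
  rw [List.getD_eq_getElem _ _ hj]
  exact hpure _ ((hL.2.1 _).1 (List.getElem_mem hj))

end Paper
end

section
/- Let $I=\{i_1,\ldots,i_k\}\subseteq\{0,\ldots,d\}$ with $i_1<\cdots<i_k$ and $d\notin I$, and let $I^c=\{0,\ldots,d+1\}\setminus I$ and $J=\{0,1,\ldots,i_k\}\setminus\{i_1,\ldots,i_{k-1}\}$. Then $\Diamond(\Gamma_{I^c})\cong\Diamond(\Gamma_J)$, and $d\notin J$. -/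
namespace Paper

variable {W : Type*} [DecidableEq W] {W' : Type*} [DecidableEq W']

/-! ### Auxiliary development for Statement 18 -/

section Aux18

lemma origV_eq_iff {d a b : ℕ} (ha : a < d+2) (hb : b < d+2) :
    origV d a = origV d b ↔ a = b := by
  unfold origV
  simp [Fin.ext_iff, Nat.mod_eq_of_lt ha, Nat.mod_eq_of_lt hb]

lemma newV_eq_iff {d a b : ℕ} (ha : a < d+1) (hb : b < d+1) :
    newV d a = newV d b ↔ a = b := by
  unfold newV
  simp [Fin.ext_iff, Nat.mod_eq_of_lt ha, Nat.mod_eq_of_lt hb]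

lemma origV_ne_newV (d a b : ℕ) : origV d a ≠ newV d b := by
  simp [origV, newV]

lemma mem_Gface {d i : ℕ} {x : V d} :
    x ∈ Gface d i ↔ ∃ j, j < d+2 ∧ j ≠ i ∧ x = origV d j := by
  simp only [Gface, Finset.mem_image, Finset.mem_filter, Finset.mem_range]
  constructor
  · rintro ⟨j, ⟨hj, hji⟩, rfl⟩; exact ⟨j, hj, hji, rfl⟩
  · rintro ⟨j, hj, hji, rfl⟩; exact ⟨j, ⟨hj, hji⟩, rfl⟩

lemma mem_Fsub {d m : ℕ} {x : V d} :
    x ∈ Fsub d m ↔ ∃ j, m < j ∧ j < d+2 ∧ x = origV d j := by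
  simp only [Fsub, Finset.mem_image, Finset.mem_Ioc]
  constructor
  · rintro ⟨j, ⟨hj1, hj2⟩, rfl⟩; exact ⟨j, hj1, by omega, rfl⟩
  · rintro ⟨j, hj1, hj2, rfl⟩; exact ⟨j, ⟨hj1, by omega⟩, rfl⟩

/-- Characterization of the faces of the intermediate complex obtained from
`Γ_i` after subdividing at `F_0, …, F_{m-1}`. -/
def MM (d m i : ℕ) (F : Finset (V d)) : Prop :=
  (m ≤ i ∧ ∀ x ∈ F, ∃ j, j < d+2 ∧ j ≠ i ∧ x = origV d j) ∨
  (i < m ∧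
    (∀ x ∈ F, (∃ j, j < d+2 ∧ j ≠ i ∧ x = origV d j) ∨
      ∃ j, i ≤ j ∧ j < m ∧ x = newV d j) ∧
    (∀ j, j < d+1 → ¬(origV d j ∈ F ∧ newV d j ∈ F)) ∧
    (∃ h, m ≤ h ∧ h < d+2 ∧ origV d h ∉ F))

def Cx (d m : ℕ) (S : Finset ℕ) : Set (Finset (V d)) := {F | ∃ i ∈ S, MM d m i F}

lemma step_lemma (d m : ℕ) (S : Finset ℕ) (hS : ∀ i ∈ S, i < d+2) (hm : m < d+1) :
    sdC (newV d m) (Fsub d m) (Cx d m S) = Cx d (m+1) S := by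
  ext F
  constructor
  · rintro (⟨⟨i, hiS, hMM⟩, hns⟩ | ⟨a, ha, bg, ⟨b, hb, g, ⟨hdis, i, hiS, hMMug⟩, rfl⟩, rfl⟩)
    · -- delFace part
      obtain ⟨x, hxFs, hxF⟩ := Finset.not_subset.mp hns
      obtain ⟨h0, hh0m, hh0d, rfl⟩ := mem_Fsub.mp hxFs
      rcases hMM with ⟨him, hall⟩ | ⟨hilt, hsupp, hpair, hhole⟩
      · by_cases hi : m+1 ≤ i
        · exact ⟨i, hiS, Or.inl ⟨hi, hall⟩⟩
        · have hieq : i = m := by omega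
          subst hieq
          refine ⟨i, hiS, Or.inr ⟨by omega, ?_, ?_, ⟨h0, by omega, hh0d, hxF⟩⟩⟩
          · intro x hx; exact Or.inl (hall x hx)
          · intro j hj ⟨hoj, hnj⟩
            obtain ⟨j', _, _, hj'⟩ := hall _ hnj
            exact origV_ne_newV d j' j hj'.symm
      · refine ⟨i, hiS, Or.inr ⟨by omega, ?_, hpair, ⟨h0, by omega, hh0d, hxF⟩⟩⟩
        intro x hx
        rcases hsupp x hx with h | ⟨j, hj1, hj2, hj3⟩
        · exact Or.inl h
        · exact Or.inr ⟨j, hj1, by omega, hj3⟩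
    · -- join part
      -- F = a ∪ (b ∪ g), a ⊆ {newV d m}, b ⊂ Fsub d m, g link face.
      have ha' : ∀ x ∈ a, x = newV d m := by
        intro x hx
        simpa using ha hx
      obtain ⟨x0, hx0Fs, hx0b⟩ := Finset.exists_of_ssubset hb
      obtain ⟨h0, hh0m, hh0d, rfl⟩ := mem_Fsub.mp hx0Fs
      have hbsub : b ⊆ Fsub d m := hb.1
      have hh0F : origV d h0 ∉ a ∪ (b ∪ g) := by
        simp only [Finset.mem_union]
        rintro (h | h | h)
        · exact origV_ne_newV d h0 m (ha' _ h)
        · exact hx0b h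
        · exact (Finset.disjoint_left.mp hdis hx0Fs) h
      rcases hMMug with ⟨him, hall⟩ | ⟨hilt, hsupp, hpair, hhole⟩
      · -- i = m necessarily
        have hieq : i = m := by
          by_contra hne'
          have hmi : m < i := by omega
          have : origV d i ∈ Fsub d m ∪ g :=
            Finset.mem_union_left _ (mem_Fsub.mpr ⟨i, hmi, hS i hiS, rfl⟩)
          obtain ⟨j, hj, hji, hj2⟩ := hall _ this
          exact hji ((origV_eq_iff (hS i hiS) hj).mp hj2).symm
        subst hieq
        refine ⟨i, hiS, Or.inr ⟨by omega, ?_, ?_, ⟨h0, by omega, hh0d, hh0F⟩⟩⟩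
        · intro x hx
          simp only [Finset.mem_union] at hx
          rcases hx with h | h | h
          · exact Or.inr ⟨i, le_rfl, by omega, ha' _ h⟩
          · obtain ⟨j, hj1, hj2, rfl⟩ := mem_Fsub.mp (hbsub h)
            exact Or.inl ⟨j, hj2, by omega, rfl⟩
          · exact Or.inl (hall _ (Finset.mem_union_right _ h))
        · intro j hj ⟨hoj, hnj⟩
          simp only [Finset.mem_union] at hoj hnj
          have hjm : j = i := by
            rcases hnj with h | h | h
            · exact (newV_eq_iff hj hm).mp (ha' _ h)
            · obtain ⟨j', _, _, hj'⟩ := mem_Fsub.mp (hbsub h)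
              exact absurd hj'.symm (origV_ne_newV d j' j)
            · obtain ⟨j', _, _, hj'⟩ := hall _ (Finset.mem_union_right _ h)
              exact absurd hj'.symm (origV_ne_newV d j' j)
          subst hjm
          rcases hoj with h | h | h
          · exact origV_ne_newV d j j (ha' _ h)
          · obtain ⟨j', hj'1, hj'2, hj'⟩ := mem_Fsub.mp (hbsub h)
            have := (origV_eq_iff (by omega) hj'2).mp hj'
            omega
          · obtain ⟨j', hj'lt, hj'i, hj'⟩ := hall _ (Finset.mem_union_right _ h)
            exact hj'i ((origV_eq_iff (by omega) hj'lt).mp hj').symm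
      · -- i < m
        obtain ⟨h1, hh1m, hh1d, hh1⟩ := hhole
        have hh1eq : h1 = m := by
          by_contra hne'
          exact hh1 (Finset.mem_union_left _ (mem_Fsub.mpr ⟨h1, by omega, hh1d, rfl⟩))
        rw [hh1eq] at hh1
        have homg : origV d m ∉ g := fun h => hh1 (Finset.mem_union_right _ h)
        refine ⟨i, hiS, Or.inr ⟨by omega, ?_, ?_, ⟨h0, by omega, hh0d, hh0F⟩⟩⟩
        · intro x hx
          simp only [Finset.mem_union] at hx
          rcases hx with h | h | h
          · exact Or.inr ⟨m, by omega, by omega, ha' _ h⟩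
          · obtain ⟨j, hj1, hj2, rfl⟩ := mem_Fsub.mp (hbsub h)
            exact Or.inl ⟨j, hj2, by omega, rfl⟩
          · rcases hsupp x (Finset.mem_union_right _ h) with h' | ⟨j, hj1, hj2, hj3⟩
            · exact Or.inl h'
            · exact Or.inr ⟨j, hj1, by omega, hj3⟩
        · intro j hj ⟨hoj, hnj⟩
          simp only [Finset.mem_union] at hoj hnj
          have hnjg : newV d j ∈ g ∨ j = m := by
            rcases hnj with h | h | h
            · exact Or.inr ((newV_eq_iff hj hm).mp (ha' _ h))
            · obtain ⟨j', _, _, hj'⟩ := mem_Fsub.mp (hbsub h)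
              exact absurd hj'.symm (origV_ne_newV d j' j)
            · exact Or.inl h
          have hojug : origV d j ∈ Fsub d m ∪ g := by
            rcases hoj with h | h | h
            · exact absurd (ha' _ h) (origV_ne_newV d j m)
            · exact Finset.mem_union_left _ (hbsub h)
            · exact Finset.mem_union_right _ h
          rcases hnjg with h | rfl
          · exact hpair j hj ⟨hojug, Finset.mem_union_right _ h⟩
          · -- j = m: origV d m ∉ Fsub ∪ g
            rcases Finset.mem_union.mp hojug with h | h
            · obtain ⟨j', hj'1, hj'2, hj'⟩ := mem_Fsub.mp h
              have := (origV_eq_iff (by omega) hj'2).mp hj'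
              omega
            · exact homg h
  · rintro ⟨i, hiS, hMM⟩
    rcases hMM with ⟨him, hall⟩ | ⟨hilt, hsupp, hpair, hhole⟩
    · -- m+1 ≤ i : in delFace
      left
      refine ⟨⟨i, hiS, Or.inl ⟨by omega, hall⟩⟩, ?_⟩
      rw [Finset.not_subset]
      refine ⟨origV d i, mem_Fsub.mpr ⟨i, by omega, hS i hiS, rfl⟩, ?_⟩
      intro hmem
      obtain ⟨j, hj, hji, hj2⟩ := hall _ hmem
      exact hji ((origV_eq_iff (hS i hiS) hj).mp hj2).symm
    · obtain ⟨h0, hh0m, hh0d, hh0⟩ := hhole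
      by_cases hnm : newV d m ∈ F
      · -- join part
        right
        refine ⟨{newV d m}, by simp [simplexOn],
          (F ∩ Fsub d m) ∪ ((F \ Fsub d m).erase (newV d m)),
          ⟨F ∩ Fsub d m, ?_, (F \ Fsub d m).erase (newV d m), ⟨?_, i, hiS, ?_⟩, rfl⟩, ?_⟩
        · -- b ∈ bdrySimplex
          show F ∩ Fsub d m ⊂ Fsub d m
          rw [Finset.ssubset_iff_subset_ne]
          refine ⟨Finset.inter_subset_right, ?_⟩
          intro hEq
          have : origV d h0 ∈ F ∩ Fsub d m := by
            rw [hEq]; exact mem_Fsub.mpr ⟨h0, by omega, hh0d, rfl⟩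
          exact hh0 (Finset.mem_inter.mp this).1
        · -- disjointness
          rw [Finset.disjoint_left]
          intro x hx hx'
          have := Finset.mem_sdiff.mp (Finset.erase_subset _ _ hx')
          exact this.2 hx
        · -- Fsub ∪ g ∈ Cx d m S
          have hgmem : ∀ x ∈ (F \ Fsub d m).erase (newV d m),
              x ∈ F ∧ x ∉ Fsub d m ∧ x ≠ newV d m := by
            intro x hx
            obtain ⟨hx1, hx2⟩ := Finset.mem_erase.mp hx
            obtain ⟨hx3, hx4⟩ := Finset.mem_sdiff.mp hx2
            exact ⟨hx3, hx4, hx1⟩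
          have homF : origV d m ∉ F := by
            intro h
            exact hpair m (by omega) ⟨h, hnm⟩
          by_cases him2 : i = m
          · subst him2
            refine Or.inl ⟨le_rfl, ?_⟩
            intro x hx
            rcases Finset.mem_union.mp hx with h | h
            · obtain ⟨j, hj1, hj2, rfl⟩ := mem_Fsub.mp h
              exact ⟨j, hj2, by omega, rfl⟩
            · obtain ⟨hxF, hxFs, hxnm⟩ := hgmem x h
              rcases hsupp x hxF with h' | ⟨j, hj1, hj2, hj3⟩
              · exact h'
              · have : j = i := by omega
                subst this
                exact absurd hj3 hxnm
          · have hilt' : i < m := by omega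
            refine Or.inr ⟨hilt', ?_, ?_, ⟨m, le_rfl, by omega, ?_⟩⟩
            · intro x hx
              rcases Finset.mem_union.mp hx with h | h
              · obtain ⟨j, hj1, hj2, rfl⟩ := mem_Fsub.mp h
                exact Or.inl ⟨j, hj2, by omega, rfl⟩
              · obtain ⟨hxF, hxFs, hxnm⟩ := hgmem x h
                rcases hsupp x hxF with h' | ⟨j, hj1, hj2, hj3⟩
                · exact Or.inl h'
                · refine Or.inr ⟨j, hj1, ?_, hj3⟩
                  rcases Nat.lt_or_ge j m with h'' | h''
                  · exact h''
                  · have : j = m := by omega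
                    subst this
                    exact absurd hj3 hxnm
            · intro j hj ⟨hoj, hnj⟩
              have hnjF : newV d j ∈ F ∧ newV d j ≠ newV d m := by
                rcases Finset.mem_union.mp hnj with h | h
                · obtain ⟨j', _, _, hj'⟩ := mem_Fsub.mp h
                  exact absurd hj'.symm (origV_ne_newV d j' j)
                · obtain ⟨h1, _, h3⟩ := hgmem _ h
                  exact ⟨h1, h3⟩
              have hjm : j ≠ m := by
                intro hEq; subst hEq
                exact hnjF.2 rfl
              rcases Finset.mem_union.mp hoj with h | h
              · -- origV d j ∈ Fsub : j > m
                obtain ⟨j', hj'1, hj'2, hj'⟩ := mem_Fsub.mp h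
                have hjj' : j = j' := (origV_eq_iff (by omega) hj'2).mp hj'
                -- but newV d j ∈ F means by hsupp j ≤ m
                rcases hsupp _ hnjF.1 with h' | ⟨j2, hj21, hj22, hj23⟩
                · obtain ⟨j3, _, _, hj3⟩ := h'
                  exact origV_ne_newV d j3 j hj3.symm
                · have : j2 = j := (newV_eq_iff (by omega) hj).mp hj23.symm
                  omega
              · obtain ⟨h1, _, _⟩ := hgmem _ h
                exact hpair j hj ⟨h1, hnjF.1⟩
            · -- origV d m ∉ Fsub ∪ g
              intro h
              rcases Finset.mem_union.mp h with h' | h'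
              · obtain ⟨j', hj'1, hj'2, hj'⟩ := mem_Fsub.mp h'
                have := (origV_eq_iff (by omega) hj'2).mp hj'
                omega
              · exact homF (hgmem _ h').1
        · -- F equals the union
          ext x
          simp only [Finset.mem_union, Finset.mem_singleton, Finset.mem_inter,
            Finset.mem_erase, Finset.mem_sdiff]
          constructor
          · intro hx
            by_cases h1 : x = newV d m
            · exact Or.inl h1
            · by_cases h2 : x ∈ Fsub d m
              · exact Or.inr (Or.inl ⟨hx, h2⟩)
              · exact Or.inr (Or.inr ⟨h1, hx, h2⟩)
          · rintro (rfl | ⟨h, _⟩ | ⟨_, h, _⟩)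
            · exact hnm
            · exact h
            · exact h
      · -- delFace part
        left
        constructor
        · refine ⟨i, hiS, ?_⟩
          by_cases him2 : i = m
          · subst him2
            refine Or.inl ⟨le_rfl, ?_⟩
            intro x hx
            rcases hsupp x hx with h' | ⟨j, hj1, hj2, hj3⟩
            · exact h'
            · have : j = i := by omega
              subst this
              exact absurd (hj3 ▸ hx) hnm
          · refine Or.inr ⟨by omega, ?_, hpair, ⟨h0, by omega, hh0d, hh0⟩⟩
            intro x hx
            rcases hsupp x hx with h' | ⟨j, hj1, hj2, hj3⟩
            · exact Or.inl h'
            · refine Or.inr ⟨j, hj1, ?_, hj3⟩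
              rcases Nat.lt_or_ge j m with h'' | h''
              · exact h''
              · have : j = m := by omega
                subst this
                exact absurd (hj3 ▸ hx) hnm
        · rw [Finset.not_subset]
          exact ⟨origV d h0, mem_Fsub.mpr ⟨h0, by omega, hh0d, rfl⟩, hh0⟩

lemma diamU_eq (d : ℕ) (S : Finset ℕ) (hS : ∀ i ∈ S, i < d+2) :
    DiamU d S = Cx d (d+1) S := by
  have base : GammaU d S = Cx d 0 S := by
    ext F
    simp only [GammaU, Cx, Set.mem_setOf_eq, MM]
    constructor
    · rintro ⟨i, hi, hsub⟩
      exact ⟨i, hi, Or.inl ⟨Nat.zero_le _, fun x hx => mem_Gface.mp (hsub hx)⟩⟩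
    · rintro ⟨i, hi, (⟨_, hall⟩ | ⟨h, _⟩)⟩
      · exact ⟨i, hi, fun x hx => mem_Gface.mpr (hall x hx)⟩
      · omega
  have key : ∀ m, m ≤ d+1 →
      (List.range m).foldl (fun Γ i => sdC (newV d i) (Fsub d i) Γ) (GammaU d S)
        = Cx d m S := by
    intro m
    induction m with
    | zero => intro _; simpa using base
    | succ k ih =>
      intro hk
      rw [List.range_succ, List.foldl_append, ih (by omega)]
      simp only [List.foldl_cons, List.foldl_nil]
      exact step_lemma d k S hS (by omega)
  simpa only [DiamU, Diam] using key (d+1) le_rfl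

/-- The swap `o_k ↔ v_k`. -/
def swp (d k : ℕ) : Equiv.Perm (V d) := Equiv.swap (origV d k) (newV d k)

lemma mem_image_swap {α : Type*} [DecidableEq α] {a b x : α} {F : Finset α} :
    x ∈ F.image ⇑(Equiv.swap a b) ↔ Equiv.swap a b x ∈ F := by
  constructor
  · intro h
    obtain ⟨y, hy, rfl⟩ := Finset.mem_image.mp h
    simpa [Equiv.swap_apply_self] using hy
  · intro h
    exact Finset.mem_image.mpr ⟨_, h, Equiv.swap_apply_self _ _ _⟩

lemma swp_orig {d k j : ℕ} (hk : k < d) (hj : j < d+2) (hjk : j ≠ k) :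
    swp d k (origV d j) = origV d j :=
  Equiv.swap_apply_of_ne_of_ne
    (fun h => hjk ((origV_eq_iff hj (by omega)).mp h)) (origV_ne_newV d j k)

lemma swp_new {d k j : ℕ} (hk : k < d) (hj : j < d+1) (hjk : j ≠ k) :
    swp d k (newV d j) = newV d j :=
  Equiv.swap_apply_of_ne_of_ne
    (fun h => origV_ne_newV d k j h.symm)
    (fun h => hjk ((newV_eq_iff hj (by omega)).mp h))

lemma swp_orig_k {d k : ℕ} : swp d k (origV d k) = newV d k := Equiv.swap_apply_left _ _

lemma swp_new_k {d k : ℕ} : swp d k (newV d k) = origV d k := Equiv.swap_apply_right _ _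

lemma image_swp_image_swp {d k : ℕ} (F : Finset (V d)) :
    (F.image ⇑(swp d k)).image ⇑(swp d k) = F := by
  rw [Finset.image_image]
  have : ⇑(swp d k) ∘ ⇑(swp d k) = id := by
    funext x
    exact Equiv.swap_apply_self _ _ _
  rw [this, Finset.image_id]

lemma transfer_lt {d k i : ℕ} (hk : k < d) (hik : i < k) {F : Finset (V d)}
    (h : MM d (d+1) i F) : MM d (d+1) i (F.image ⇑(swp d k)) := by
  rcases h with ⟨him, _⟩ | ⟨hilt, hsupp, hpair, hhole⟩
  · omega
  refine Or.inr ⟨by omega, ?_, ?_, ?_⟩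
  · intro y hy
    obtain ⟨x, hx, rfl⟩ := Finset.mem_image.mp hy
    rcases hsupp x hx with ⟨j, hj1, hj2, rfl⟩ | ⟨j, hj1, hj2, rfl⟩
    · by_cases hjk : j = k
      · subst hjk
        rw [swp_orig_k]
        exact Or.inr ⟨j, by omega, by omega, rfl⟩
      · rw [swp_orig hk hj1 hjk]
        exact Or.inl ⟨j, hj1, hj2, rfl⟩
    · by_cases hjk : j = k
      · subst hjk
        rw [swp_new_k]
        exact Or.inl ⟨j, by omega, by omega, rfl⟩
      · rw [swp_new hk (by omega) hjk]
        exact Or.inr ⟨j, hj1, hj2, rfl⟩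
  · intro j hj ⟨hoj, hnj⟩
    rw [show ⇑(swp d k) = ⇑(Equiv.swap (origV d k) (newV d k)) from rfl,
      mem_image_swap] at hoj hnj
    by_cases hjk : j = k
    · subst hjk
      rw [show Equiv.swap (origV d j) (newV d j) (origV d j) = newV d j from
        Equiv.swap_apply_left _ _] at hoj
      rw [show Equiv.swap (origV d j) (newV d j) (newV d j) = origV d j from
        Equiv.swap_apply_right _ _] at hnj
      exact hpair j hj ⟨hnj, hoj⟩
    · rw [show Equiv.swap (origV d k) (newV d k) (origV d j) = origV d j from
        swp_orig hk (by omega) hjk] at hoj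
      rw [show Equiv.swap (origV d k) (newV d k) (newV d j) = newV d j from
        swp_new hk hj hjk] at hnj
      exact hpair j hj ⟨hoj, hnj⟩
  · obtain ⟨h0, hh1, hh2, hh3⟩ := hhole
    have h0eq : h0 = d+1 := by omega
    subst h0eq
    refine ⟨d+1, le_rfl, by omega, ?_⟩
    rw [show ⇑(swp d k) = ⇑(Equiv.swap (origV d k) (newV d k)) from rfl, mem_image_swap,
      show Equiv.swap (origV d k) (newV d k) (origV d (d+1)) = origV d (d+1) from
        swp_orig hk (by omega) (by omega)]
    exact hh3

lemma transfer_gt {d k i : ℕ} (hk : k < d) (hki : k < i) (hid : i < d+2)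
    {F : Finset (V d)} (h : MM d (d+1) i F) :
    MM d (d+1) k (F.image ⇑(swp d k)) := by
  have hod1 : ∀ {G : Finset (V d)},
      origV d (d+1) ∈ G.image ⇑(swp d k) ↔ origV d (d+1) ∈ G := by
    intro G
    rw [show ⇑(swp d k) = ⇑(Equiv.swap (origV d k) (newV d k)) from rfl, mem_image_swap,
      show Equiv.swap (origV d k) (newV d k) (origV d (d+1)) = origV d (d+1) from
        swp_orig hk (by omega) (by omega)]
  rcases h with ⟨him, hall⟩ | ⟨hilt, hsupp, hpair, hhole⟩
  · -- i = d+1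
    have hieq : i = d+1 := by omega
    subst hieq
    refine Or.inr ⟨by omega, ?_, ?_, ⟨d+1, le_rfl, by omega, ?_⟩⟩
    · intro y hy
      obtain ⟨x, hx, rfl⟩ := Finset.mem_image.mp hy
      obtain ⟨j, hj1, hj2, rfl⟩ := hall x hx
      by_cases hjk : j = k
      · subst hjk
        rw [swp_orig_k]
        exact Or.inr ⟨j, le_rfl, by omega, rfl⟩
      · rw [swp_orig hk hj1 hjk]
        exact Or.inl ⟨j, hj1, hjk, rfl⟩
    · intro j hj ⟨hoj, hnj⟩
      rw [show ⇑(swp d k) = ⇑(Equiv.swap (origV d k) (newV d k)) from rfl,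
        mem_image_swap] at hoj hnj
      by_cases hjk : j = k
      · subst hjk
        rw [show Equiv.swap (origV d j) (newV d j) (origV d j) = newV d j from
          Equiv.swap_apply_left _ _] at hoj
        obtain ⟨j', _, _, hj'⟩ := hall _ hoj
        exact origV_ne_newV d j' j hj'.symm
      · rw [show Equiv.swap (origV d k) (newV d k) (newV d j) = newV d j from
          swp_new hk hj hjk] at hnj
        obtain ⟨j', _, _, hj'⟩ := hall _ hnj
        exact origV_ne_newV d j' j hj'.symm
    · rw [hod1]
      intro hmem
      obtain ⟨j, hj1, hj2, hj'⟩ := hall _ hmem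
      exact hj2 ((origV_eq_iff hj1 (by omega)).mp hj'.symm)
  · -- k < i ≤ d
    refine Or.inr ⟨by omega, ?_, ?_, ⟨d+1, le_rfl, by omega, ?_⟩⟩
    · intro y hy
      obtain ⟨x, hx, rfl⟩ := Finset.mem_image.mp hy
      rcases hsupp x hx with ⟨j, hj1, hj2, rfl⟩ | ⟨j, hj1, hj2, rfl⟩
      · by_cases hjk : j = k
        · subst hjk
          rw [swp_orig_k]
          exact Or.inr ⟨j, le_rfl, by omega, rfl⟩
        · rw [swp_orig hk hj1 hjk]
          exact Or.inl ⟨j, hj1, hjk, rfl⟩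
      · have hjk : j ≠ k := by omega
        rw [swp_new hk (by omega) hjk]
        exact Or.inr ⟨j, by omega, by omega, rfl⟩
    · intro j hj ⟨hoj, hnj⟩
      rw [show ⇑(swp d k) = ⇑(Equiv.swap (origV d k) (newV d k)) from rfl,
        mem_image_swap] at hoj hnj
      by_cases hjk : j = k
      · subst hjk
        rw [show Equiv.swap (origV d j) (newV d j) (origV d j) = newV d j from
          Equiv.swap_apply_left _ _] at hoj
        rcases hsupp _ hoj with ⟨j', _, _, hj'⟩ | ⟨j', hj'1, hj'2, hj'⟩
        · exact origV_ne_newV d j' j hj'.symm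
        · have := (newV_eq_iff hj (by omega)).mp hj'
          omega
      · rw [show Equiv.swap (origV d k) (newV d k) (origV d j) = origV d j from
          swp_orig hk (by omega) hjk] at hoj
        rw [show Equiv.swap (origV d k) (newV d k) (newV d j) = newV d j from
          swp_new hk hj hjk] at hnj
        exact hpair j hj ⟨hoj, hnj⟩
    · rw [hod1]
      obtain ⟨h0, hh1, hh2, hh3⟩ := hhole
      have : h0 = d+1 := by omega
      subst this
      exact hh3

lemma transfer_eq {d k : ℕ} (hk : k < d) {F : Finset (V d)}
    (h : MM d (d+1) k F) :
    ∃ i, k < i ∧ i < d+2 ∧ MM d (d+1) i (F.image ⇑(swp d k)) := by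
  rcases h with ⟨him, _⟩ | ⟨hilt, hsupp, hpair, hhole⟩
  · omega
  obtain ⟨h0, hh1, hh2, hh3⟩ := hhole
  have h0eq : h0 = d+1 := by omega
  subst h0eq
  have hod1 : ∀ {G : Finset (V d)},
      origV d (d+1) ∈ G.image ⇑(swp d k) ↔ origV d (d+1) ∈ G := by
    intro G
    rw [show ⇑(swp d k) = ⇑(Equiv.swap (origV d k) (newV d k)) from rfl, mem_image_swap,
      show Equiv.swap (origV d k) (newV d k) (origV d (d+1)) = origV d (d+1) from
        swp_orig hk (by omega) (by omega)]
  have hokF : origV d k ∉ F := by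
    intro hmem
    rcases hsupp _ hmem with ⟨j, hj1, hj2, hj'⟩ | ⟨j, _, _, hj'⟩
    · exact hj2 ((origV_eq_iff hj1 (by omega)).mp hj'.symm)
    · exact origV_ne_newV d k j hj'
  classical
  by_cases hex : ∃ j, k < j ∧ j < d+1 ∧ newV d j ∈ F
  · set j0 := Nat.find hex with hj0def
    obtain ⟨hkj0, hj0d, hj0F⟩ := Nat.find_spec hex
    have hmin : ∀ j, j < j0 → ¬(k < j ∧ j < d+1 ∧ newV d j ∈ F) :=
      fun j hj => Nat.find_min hex hj
    refine ⟨j0, hkj0, by omega, Or.inr ⟨by omega, ?_, ?_, ⟨d+1, le_rfl, by omega, ?_⟩⟩⟩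
    · intro y hy
      obtain ⟨x, hx, rfl⟩ := Finset.mem_image.mp hy
      rcases hsupp x hx with ⟨j, hj1, hj2, rfl⟩ | ⟨j, hj1, hj2, rfl⟩
      · have hjj0 : j ≠ j0 := by
          intro hEq; subst hEq
          exact hpair j0 (by omega) ⟨hx, hj0F⟩
        rw [swp_orig hk hj1 hj2]
        exact Or.inl ⟨j, hj1, hjj0, rfl⟩
      · by_cases hjk : j = k
        · subst hjk
          rw [swp_new_k]
          exact Or.inl ⟨j, by omega, by omega, rfl⟩
        · rw [swp_new hk (by omega) hjk]
          have hj0le : j0 ≤ j := by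
            by_contra hlt
            exact hmin j (by omega) ⟨by omega, by omega, hx⟩
          exact Or.inr ⟨j, hj0le, by omega, rfl⟩
    · intro j hj ⟨hoj, hnj⟩
      rw [show ⇑(swp d k) = ⇑(Equiv.swap (origV d k) (newV d k)) from rfl,
        mem_image_swap] at hoj hnj
      by_cases hjk : j = k
      · subst hjk
        rw [show Equiv.swap (origV d j) (newV d j) (newV d j) = origV d j from
          Equiv.swap_apply_right _ _] at hnj
        exact hokF hnj
      · rw [show Equiv.swap (origV d k) (newV d k) (origV d j) = origV d j from
          swp_orig hk (by omega) hjk] at hoj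
        rw [show Equiv.swap (origV d k) (newV d k) (newV d j) = newV d j from
          swp_new hk hj hjk] at hnj
        exact hpair j hj ⟨hoj, hnj⟩
    · rw [hod1]
      exact hh3
  · push_neg at hex
    refine ⟨d+1, by omega, by omega, Or.inl ⟨le_rfl, ?_⟩⟩
    intro y hy
    obtain ⟨x, hx, rfl⟩ := Finset.mem_image.mp hy
    rcases hsupp x hx with ⟨j, hj1, hj2, rfl⟩ | ⟨j, hj1, hj2, rfl⟩
    · have hjd1 : j ≠ d+1 := by
        intro hEq; subst hEq
        exact hh3 hx
      rw [swp_orig hk hj1 hj2]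
      exact ⟨j, hj1, hjd1, rfl⟩
    · have hjk : j = k := by
        by_contra hne'
        exact hex j (by omega) (by omega) hx
      subst hjk
      rw [swp_new_k]
      exact ⟨j, by omega, by omega, rfl⟩

end Aux18

/-- `⋄(Γ_{I^c}) ≅ ⋄(Γ_J)` with `J = {0,…,i_k} ∖ {i_1,…,i_{k-1}}`,
and `d ∉ J`. -/
theorem stmt18 (d : ℕ) (I : Finset ℕ) (hne : I.Nonempty) (hI : ∀ i ∈ I, i ≤ d)
    (hd : d ∉ I) :
    IsoC (DiamU d (Finset.range (d+2) \ I))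
      (DiamU d (Finset.range (I.max' hne + 1) \ I.erase (I.max' hne))) ∧
    d ∉ Finset.range (I.max' hne + 1) \ I.erase (I.max' hne) := by
  set k := I.max' hne with hkdef
  have hkI : k ∈ I := I.max'_mem hne
  have hkd : k < d := lt_of_le_of_ne (hI k hkI) (fun h => hd (h ▸ hkI))
  have hmaxle : ∀ i ∈ I, i ≤ k := fun i hi => I.le_max' i hi
  have hA : ∀ i ∈ Finset.range (d+2) \ I, i < d+2 := by
    intro i hi
    exact Finset.mem_range.mp (Finset.mem_sdiff.mp hi).1
  have hB : ∀ i ∈ Finset.range (k+1) \ I.erase k, i < d+2 := by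
    intro i hi
    have := Finset.mem_range.mp (Finset.mem_sdiff.mp hi).1
    omega
  constructor
  · refine ⟨swp d k, ?_⟩
    intro F
    rw [diamU_eq d _ hA, diamU_eq d _ hB]
    constructor
    · rintro ⟨i, hiA, hMM⟩
      obtain ⟨hir, hiI⟩ := Finset.mem_sdiff.mp hiA
      have hid2 : i < d+2 := Finset.mem_range.mp hir
      rcases lt_trichotomy i k with hik | rfl | hki
      · refine ⟨i, ?_, transfer_lt hkd hik hMM⟩
        rw [Finset.mem_sdiff, Finset.mem_range, Finset.mem_erase]
        exact ⟨by omega, fun h => hiI h.2⟩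
      · exact absurd hkI hiI
      · refine ⟨k, ?_, transfer_gt hkd hki hid2 hMM⟩
        rw [Finset.mem_sdiff, Finset.mem_range, Finset.mem_erase]
        exact ⟨by omega, fun h => h.1 rfl⟩
    · rintro ⟨i, hiB, hMM⟩
      obtain ⟨hir, hiE⟩ := Finset.mem_sdiff.mp hiB
      have hik1 : i < k+1 := Finset.mem_range.mp hir
      rcases Nat.lt_or_ge i k with hik | hge
      · have hiI : i ∉ I := by
          intro h
          exact hiE (Finset.mem_erase.mpr ⟨by omega, h⟩)
        have := transfer_lt hkd hik hMM
        rw [image_swp_image_swp] at this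
        refine ⟨i, ?_, this⟩
        rw [Finset.mem_sdiff, Finset.mem_range]
        exact ⟨by omega, hiI⟩
      · have hieq : i = k := by omega
        subst hieq
        obtain ⟨i', hki', hi'd, hMM'⟩ := transfer_eq hkd hMM
        rw [image_swp_image_swp] at hMM'
        refine ⟨i', ?_, hMM'⟩
        rw [Finset.mem_sdiff, Finset.mem_range]
        refine ⟨hi'd, fun h => ?_⟩
        have := hmaxle i' h
        omega
  · rw [Finset.mem_sdiff, Finset.mem_range]
    rintro ⟨h1, _⟩
    omega

end Paper
end
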